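/- arXiv:2502.02819 — 6 statements merged into one kernel-verified Lean document; each statement's English description precedes it below -/
import Mathlib

section
/- There is no affine map x ↦ εx + c on ℤ/13 with ε ∈ {1, −1} and c ∈ ℤ/13 that maps the set {0, 1, 3, 9} onto the set {0, 1, 4, 6}. -/
/-! The elements of `{0, 1, 3, 9}` sum to `0` and those of `{0, 1, 4, 6}` to `11`, so comparing sums
forces `4c = 11`, i.e. `c = 6`; neither `x ↦ x + 6` nor `x ↦ 6 - x` maps one set onto the other. -/

open Finset

theorem Finset.sum_image_mul_add {R : Type*} [CommRing R] [DecidableEq R] {ε : R}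
    (hε : IsUnit ε) (c : R) (s : Finset R) :
    ∑ y ∈ s.image (fun x => ε * x + c), y = ε * ∑ x ∈ s, x + #s • c := by
  have hinj : Function.Injective (fun x => ε * x + c) :=
    (add_left_injective c).comp hε.mul_right_injective
  rw [sum_image fun x _ y _ h => hinj h, sum_add_distrib, mul_sum, sum_const]

/-- No affine map `x ↦ εx + c` on `ℤ/13` with `ε = ±1` maps `{0, 1, 3, 9}` onto `{0, 1, 4, 6}`. -/
theorem stmt_6 :
    ¬ ∃ (ε c : ZMod 13), (ε = 1 ∨ ε = -1) ∧
      (fun x => ε * x + c) '' ({0, 1, 3, 9} : Set (ZMod 13)) =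
        ({0, 1, 4, 6} : Set (ZMod 13)) := by
  rintro ⟨ε, c, hε, h⟩
  have himg : ({0, 1, 3, 9} : Finset (ZMod 13)).image (fun x => ε * x + c) = {0, 1, 4, 6} := by
    rw [← coe_inj]
    push_cast
    exact h
  have hunit : IsUnit ε := by rcases hε with rfl | rfl <;> simp
  have hsum := congrArg (∑ y ∈ ·, y) himg
  have hS : ∑ x ∈ ({0, 1, 3, 9} : Finset (ZMod 13)), x = 0 := by decide
  have hT : ∑ x ∈ ({0, 1, 4, 6} : Finset (ZMod 13)), x = 11 := by decide
  have hcard : #({0, 1, 3, 9} : Finset (ZMod 13)) = 4 := by decide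
  have h4c : 4 * c = 11 := by
    rwa [sum_image_mul_add hunit, hS, hT, hcard, mul_zero, zero_add, nsmul_eq_mul,
      Nat.cast_ofNat] at hsum
  have hc : c = 6 := (by decide : ∀ c : ZMod 13, 4 * c = 11 → c = 6) c h4c
  subst hc
  rcases hε with rfl | rfl <;> revert himg <;> decide
end

section
/- Let A = P_A + 13ℤ and B = P_B + 13ℤ be the 1D periodic point sets with P_A = {0, 1, 3, 9} and P_B = {0, 1, 4, 6}. Then for every real r > 0 and every j ∈ {1,...,4}, the number of ordered pairs (p, q) with p ∈ P_A, q ∈ A, and |p − q| = r equals the number of ordered pairs (p, q) with p ∈ P_B, q ∈ B, and |p − q| = r. That is, A and B have identical theta series (identical radial pair-distance counts). -/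
/-- The 1D periodic point set with period `L` and basis `P`. -/
def perSet (L : ℝ) (P : Set ℝ) : Set ℝ := {t | ∃ x ∈ P, ∃ n : ℤ, t = x + L * n}

/-- The number of ordered pairs `(p, q)` with `p` in the basis `P`, `q` in the
periodic set `S`, at distance `r`. -/
noncomputable def pairCount1D (P S : Set ℝ) (r : ℝ) : ℕ :=
  {pq : ℝ × ℝ | pq.1 ∈ P ∧ pq.2 ∈ S ∧ |pq.1 - pq.2| = r}.ncard

/-!
For a basis `P` whose points are pairwise incongruent modulo `L`, a pair `(p, q)` with `p ∈ P`,
`q ∈ P + Lℤ` and `p - q = y` is determined by `p` together with the unique `x ∈ P` such that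
`q ≡ x`, subject to `p - x ≡ y (mod L)`. Hence the number of pairs at distance `r > 0` is the
multiplicity of `r` plus that of `-r` in the multiset of differences `P - P` taken in `ℝ/Lℤ`,
and two bases with the same difference multiset give the same counts. For integer bases and
integer `L` that multiset is the image of the difference multiset in `ZMod L`.
-/

open Finset

noncomputable def diffMultiset (L : ℝ) (P : Finset ℝ) : Multiset (AddCircle L) :=
  (P ×ˢ P).val.map fun pq => ((pq.1 - pq.2 : ℝ) : AddCircle L)

def pairsWithDiff (P S : Set ℝ) (y : ℝ) : Set (ℝ × ℝ) :=
  {pq | pq.1 ∈ P ∧ pq.2 ∈ S ∧ pq.1 - pq.2 = y}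

theorem mem_perSet_iff {L q : ℝ} {P : Set ℝ} :
    q ∈ perSet L P ↔ ∃ x ∈ P, (x : AddCircle L) = q := by
  simp only [perSet, Set.mem_ofPred_eq, QuotientAddGroup.eq, AddSubgroup.mem_zmultiples_iff,
    zsmul_eq_mul]
  refine exists_congr fun x => and_congr_right fun _ => exists_congr fun n => ?_
  constructor <;> intro h <;> linarith

open Classical in
theorem pairsWithDiff_perSet_eq_image (L : ℝ) (P : Finset ℝ) (y : ℝ) :
    pairsWithDiff P (perSet L P) y =
      (fun pq : ℝ × ℝ => (pq.1, pq.1 - y)) ''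
        ↑((P ×ˢ P).filter fun pq =>
          (y : AddCircle L) = ((pq.1 - pq.2 : ℝ) : AddCircle L)) := by
  ext ⟨p, q⟩
  simp only [pairsWithDiff, Set.mem_ofPred_eq, Set.mem_image, coe_filter, mem_product,
    Prod.exists, Prod.mk.injEq, mem_perSet_iff, mem_coe]
  constructor
  · rintro ⟨hp, ⟨x, hx, hxq⟩, rfl⟩
    refine ⟨p, x, ⟨⟨hp, hx⟩, ?_⟩, rfl, by ring⟩
    rw [AddCircle.coe_sub, AddCircle.coe_sub, hxq]
  · rintro ⟨p, x, ⟨⟨hp, hx⟩, hy⟩, rfl, rfl⟩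
    refine ⟨hp, ⟨x, hx, ?_⟩, by ring⟩
    rw [AddCircle.coe_sub, hy, AddCircle.coe_sub, sub_sub_cancel]

theorem finite_pairsWithDiff_perSet (L : ℝ) (P : Finset ℝ) (y : ℝ) :
    (pairsWithDiff P (perSet L P) y).Finite := by
  classical
  rw [pairsWithDiff_perSet_eq_image]
  exact (finite_toSet _).image _

theorem ncard_pairsWithDiff_perSet {L : ℝ} {P : Finset ℝ}
    (hP : Set.InjOn ((↑) : ℝ → AddCircle L) P) (y : ℝ) :
    (pairsWithDiff P (perSet L P) y).ncard = (diffMultiset L P).count (y : AddCircle L) := by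
  classical
  rw [pairsWithDiff_perSet_eq_image, Set.InjOn.ncard_image, Set.ncard_coe_finset, diffMultiset,
    Multiset.count_map, card_def, filter_val]
  rintro ⟨p, x⟩ hpx ⟨p', x'⟩ hpx' h
  simp only [coe_filter, mem_product, Set.mem_ofPred_eq, Prod.mk.injEq] at hpx hpx' h
  obtain ⟨rfl, -⟩ := h
  have : (x : AddCircle L) = x' := by
    simpa [AddCircle.coe_sub] using hpx.2.symm.trans hpx'.2
  rw [hP hpx.1.2 hpx'.1.2 this]

theorem pairCount1D_perSet {L r : ℝ} {P : Finset ℝ}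
    (hP : Set.InjOn ((↑) : ℝ → AddCircle L) P) (hr : 0 < r) :
    pairCount1D P (perSet L P) r =
      (diffMultiset L P).count (r : AddCircle L) +
        (diffMultiset L P).count ((-r : ℝ) : AddCircle L) := by
  have hsplit : {pq : ℝ × ℝ | pq.1 ∈ (P : Set ℝ) ∧ pq.2 ∈ perSet L P ∧ |pq.1 - pq.2| = r} =
      pairsWithDiff P (perSet L P) r ∪ pairsWithDiff P (perSet L P) (-r) := by
    ext
    simp only [pairsWithDiff, Set.mem_union, Set.mem_ofPred_eq, abs_eq hr.le, and_or_left]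
  have hdisj : Disjoint (pairsWithDiff P (perSet L P) r) (pairsWithDiff P (perSet L P) (-r)) :=
    Set.disjoint_left.2 fun pq h h' => by linarith [h.2.2, h'.2.2]
  rw [pairCount1D, hsplit, Set.ncard_union_eq hdisj (finite_pairsWithDiff_perSet L P r)
    (finite_pairsWithDiff_perSet L P (-r)), ncard_pairsWithDiff_perSet hP,
    ncard_pairsWithDiff_perSet hP]

theorem pairCount1D_perSet_eq_of_diffMultiset_eq {L r : ℝ} {P Q : Finset ℝ}
    (hP : Set.InjOn ((↑) : ℝ → AddCircle L) P)
    (hQ : Set.InjOn ((↑) : ℝ → AddCircle L) Q)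
    (hPQ : diffMultiset L P = diffMultiset L Q) (hr : 0 < r) :
    pairCount1D P (perSet L P) r = pairCount1D Q (perSet L Q) r := by
  rw [pairCount1D_perSet hP hr, pairCount1D_perSet hQ hr, hPQ]

def intToAddCircle (N : ℕ) : ZMod N →+ AddCircle (N : ℝ) :=
  ZMod.lift N ⟨(QuotientAddGroup.mk' _).comp (Int.castAddHom ℝ), by simp⟩

theorem intToAddCircle_intCast (N : ℕ) (n : ℤ) :
    intToAddCircle N n = ((n : ℝ) : AddCircle (N : ℝ)) :=
  ZMod.lift_coe _ _ _

theorem intCast_eq_of_addCircle_eq {N : ℕ} {a b : ℤ}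
    (h : ((a : ℝ) : AddCircle (N : ℝ)) = (b : ℝ)) : (a : ZMod N) = b := by
  obtain ⟨k, hk⟩ := AddSubgroup.mem_zmultiples_iff.1 (QuotientAddGroup.eq.1 h)
  rw [ZMod.intCast_eq_intCast_iff_dvd_sub]
  rw [zsmul_eq_mul] at hk
  have hk' : ((b - a : ℤ) : ℝ) = ((N * k : ℤ) : ℝ) := by push_cast; linarith
  exact ⟨k, Int.cast_injective hk'⟩

def intCastEmbedding : ℤ ↪ ℝ := ⟨Int.cast, Int.cast_injective⟩

@[simp]
theorem intCastEmbedding_apply (n : ℤ) : intCastEmbedding n = n := rfl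

def zmodDiffMultiset (N : ℕ) (P : Finset ℤ) : Multiset (ZMod N) :=
  (P ×ˢ P).val.map fun pq => ((pq.1 - pq.2 : ℤ) : ZMod N)

theorem diffMultiset_map_intCast (N : ℕ) (P : Finset ℤ) :
    diffMultiset N (P.map intCastEmbedding) =
      (zmodDiffMultiset N P).map (intToAddCircle N) := by
  rw [diffMultiset, zmodDiffMultiset, ← prodMap_map_product, map_val, Multiset.map_map,
    Multiset.map_map]
  congr 1
  ext pq
  simp [intToAddCircle_intCast]

theorem injOn_map_intCast {N : ℕ} {P : Finset ℤ}
    (hP : Set.InjOn (Int.cast : ℤ → ZMod N) P) :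
    Set.InjOn ((↑) : ℝ → AddCircle (N : ℝ)) (P.map intCastEmbedding : Set ℝ) := by
  simp only [coe_map]
  rintro _ ⟨a, ha, rfl⟩ _ ⟨b, hb, rfl⟩ h
  rw [hP ha hb (intCast_eq_of_addCircle_eq h)]

theorem pairCount1D_perSet_eq_of_zmodDiffMultiset_eq {N : ℕ} {r : ℝ} {P Q : Finset ℤ}
    (hP : Set.InjOn (Int.cast : ℤ → ZMod N) P) (hQ : Set.InjOn (Int.cast : ℤ → ZMod N) Q)
    (hPQ : zmodDiffMultiset N P = zmodDiffMultiset N Q) (hr : 0 < r) :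
    pairCount1D (P.map intCastEmbedding) (perSet N (P.map intCastEmbedding)) r =
      pairCount1D (Q.map intCastEmbedding) (perSet N (Q.map intCastEmbedding)) r :=
  pairCount1D_perSet_eq_of_diffMultiset_eq (injOn_map_intCast hP) (injOn_map_intCast hQ)
    (by rw [diffMultiset_map_intCast, diffMultiset_map_intCast, hPQ]) hr

-- Both bases are perfect difference sets: each nonzero residue is hit exactly once.
theorem zmodDiffMultiset_thirteen :
    zmodDiffMultiset 13 {0, 1, 3, 9} = zmodDiffMultiset 13 {0, 1, 4, 6} := by
  decide

/-- The 1D crystals with period 13 and bases `{0,1,3,9}` and `{0,1,4,6}` have identical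
theta series: for every `r > 0`, the pair-distance counts agree. -/
theorem stmt_7 :
    ∀ r : ℝ, 0 < r →
      pairCount1D ({0, 1, 3, 9} : Set ℝ) (perSet 13 ({0, 1, 3, 9} : Set ℝ)) r =
      pairCount1D ({0, 1, 4, 6} : Set ℝ) (perSet 13 ({0, 1, 4, 6} : Set ℝ)) r := by
  intro r hr
  have hA : ({0, 1, 3, 9} : Set ℝ) = (({0, 1, 3, 9} : Finset ℤ).map intCastEmbedding : Set ℝ) :=
    by simp
  have hB : ({0, 1, 4, 6} : Set ℝ) = (({0, 1, 4, 6} : Finset ℤ).map intCastEmbedding : Set ℝ) :=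
    by simp
  rw [hA, hB, show (13 : ℝ) = ((13 : ℕ) : ℝ) by norm_num]
  exact pairCount1D_perSet_eq_of_zmodDiffMultiset_eq (by decide) (by decide)
    zmodDiffMultiset_thirteen hr
end

section
/- There is no isometry of ℝ mapping the periodic point set A = {0, 1, 3, 9} + 13ℤ onto B = {0, 1, 4, 6} + 13ℤ. -/
/-!
An isometry of `ℝ` is `x ↦ c ± x`. As `0` lies in `A`, `c = f 0` lies in `B ⊆ ℤ`, so the isometry
descends to the map `x ↦ c ± x` of `ℤ/13`, which would have to send `{0, 1, 3, 9}` into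
`{0, 1, 4, 6}`; a finite check shows that no such map does.
-/

open Set

theorem Isometry.real_eq_add_mul {f : ℝ → ℝ} (hf : Isometry f) (x : ℝ) :
    f x = f 0 + (f 1 - f 0) * x := by
  have dist_sq (a b : ℝ) : (f a - f b) ^ 2 = (a - b) ^ 2 := by
    rw [← sq_abs, ← Real.dist_eq, hf.dist_eq, Real.dist_eq, sq_abs]
  have h0 := dist_sq x 0
  have h1 := dist_sq x 1
  have hs := dist_sq 1 0
  -- with `s = f 1 - f 0`, `y = f x - f 0`: `h0 - h1 + hs` says `2 s y = 2 x`, and `s ^ 2 = 1`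
  linear_combination (-(f x - f 0)) * hs + (f 1 - f 0) / 2 * (h0 - h1 + hs)

theorem Isometry.real_eq_add_or_sub {f : ℝ → ℝ} (hf : Isometry f) :
    (f = fun x => f 0 + x) ∨ (f = fun x => f 0 - x) := by
  have hslope : |f 1 - f 0| = 1 := by
    rw [← Real.dist_eq, hf.dist_eq, Real.dist_eq, sub_zero, abs_one]
  rcases abs_eq zero_le_one |>.mp hslope with h | h
  · left; funext x; rw [hf.real_eq_add_mul, h, one_mul]
  · right; funext x; rw [hf.real_eq_add_mul, h]; ring

theorem perSet_intCast_subset_range {L : ℤ} {Q : Set ℤ} :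
    perSet L (Int.cast '' Q) ⊆ range ((↑) : ℤ → ℝ) := by
  rintro _ ⟨_, ⟨q, -, rfl⟩, n, rfl⟩
  exact ⟨q + L * n, by push_cast; rfl⟩

theorem intCast_mem_perSet_iff {L : ℕ} {Q : Set ℤ} {k : ℤ} :
    (k : ℝ) ∈ perSet L (Int.cast '' Q) ↔ ∃ q ∈ Q, (q : ZMod L) = k := by
  constructor
  · rintro ⟨_, ⟨q, hq, rfl⟩, n, hk⟩
    refine ⟨q, hq, (ZMod.intCast_eq_intCast_iff_dvd_sub _ _ _).mpr ⟨n, ?_⟩⟩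
    exact_mod_cast (show (k : ℝ) - q = L * n by rw [hk]; ring)
  · rintro ⟨q, hq, hqk⟩
    obtain ⟨n, hn⟩ := (ZMod.intCast_eq_intCast_iff_dvd_sub _ _ _).mp hqk
    exact ⟨q, ⟨q, hq, rfl⟩, n, by rw [← sub_add_cancel (k : ℝ) q]; exact_mod_cast by omega⟩

theorem mapsTo_residues_of_mapsTo_perSet {L : ℕ} {P Q : Set ℤ} {c ε : ℤ}
    (h : MapsTo (fun x : ℝ => c + ε * x) (perSet L (Int.cast '' P)) (perSet L (Int.cast '' Q))) :
    MapsTo (fun x : ZMod L => c + ε * x) (Int.cast '' P) (Int.cast '' Q) := by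
  rintro _ ⟨p, hp, rfl⟩
  have hmem : ((c + ε * p : ℤ) : ℝ) ∈ perSet L (Int.cast '' Q) := by
    push_cast; exact h (show (p : ℝ) ∈ _ from ⟨p, ⟨p, hp, rfl⟩, 0, by simp⟩)
  obtain ⟨q, hq, hqk⟩ := intCast_mem_perSet_iff.mp hmem
  exact ⟨q, hq, by push_cast at hqk; exact hqk⟩

theorem not_exists_affine_mapsTo_zmod13 :
    ¬ ∃ c ε : ZMod 13, (ε = 1 ∨ ε = -1) ∧
      MapsTo (fun x => c + ε * x) ({0, 1, 3, 9} : Set (ZMod 13)) {0, 1, 4, 6} := by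
  simp only [MapsTo, mem_insert_iff, mem_singleton_iff, forall_eq_or_imp, forall_eq]
  decide

/-- No isometry of `ℝ` maps `{0,1,3,9} + 13ℤ` onto `{0,1,4,6} + 13ℤ`. -/
theorem stmt_8 :
    ¬ ∃ f : ℝ → ℝ, Isometry f ∧
      f '' perSet 13 ({0, 1, 3, 9} : Set ℝ) = perSet 13 ({0, 1, 4, 6} : Set ℝ) := by
  rintro ⟨f, hf, himg⟩
  have hA : perSet 13 ({0, 1, 3, 9} : Set ℝ) = perSet (13 : ℕ) (Int.cast '' {0, 1, 3, 9}) := by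
    simp [image_insert_eq]
  have hB : perSet 13 ({0, 1, 4, 6} : Set ℝ) = perSet (13 : ℕ) (Int.cast '' {0, 1, 4, 6}) := by
    simp [image_insert_eq]
  have hmaps : MapsTo f (perSet (13 : ℕ) (Int.cast '' {0, 1, 3, 9}))
      (perSet (13 : ℕ) (Int.cast '' {0, 1, 4, 6})) := by
    rw [← hA, ← hB, ← himg]; exact mapsTo_image f _
  obtain ⟨c, hc⟩ : f 0 ∈ range ((↑) : ℤ → ℝ) :=
    perSet_intCast_subset_range (hmaps ⟨0, ⟨0, by simp, Int.cast_zero⟩, 0, by simp⟩)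
  obtain ⟨ε, hε, hf_eq⟩ : ∃ ε : ℤ, (ε = 1 ∨ ε = -1) ∧ f = fun x : ℝ => c + ε * x := by
    rcases hf.real_eq_add_or_sub with h | h
    · exact ⟨1, Or.inl rfl, by rw [h, ← hc]; simp⟩
    · exact ⟨-1, Or.inr rfl, by rw [h, ← hc]; funext x; push_cast; ring⟩
  have hres := mapsTo_residues_of_mapsTo_perSet (hf_eq ▸ hmaps)
  simp only [image_insert_eq, image_singleton, Int.cast_zero, Int.cast_one, Int.cast_ofNat] at hres
  exact not_exists_affine_mapsTo_zmod13 ⟨c, ε, by rcases hε with rfl | rfl <;> simp, hres⟩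
end

section
/- Every pair distance of a 1D periodic point set S = P + Lℤ (with P ⊆ [0, L) finite) has the form |x − y + nL| for some x, y ∈ P and n ∈ ℤ; conversely every such value with (x, y, n) ≠ (x, x, 0) is realized as a distance between two distinct points of S. Hence if two such sets S₁ = P₁ + Lℤ and S₂ = P₂ + Lℤ satisfy that the multisets of gaps {|x − y| : x, y ∈ Pᵢ, x ≠ y} ∪ {L − |x − y| : x, y ∈ Pᵢ, x ≠ y} coincide (with multiplicity), then S₁ and S₂ have identical pair-distance multisets (are isospectral). -/
/-- The multiplicity of `r` in the circular gap multiset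
`{|x − y| : x ≠ y ∈ P} ∪ {L − |x − y| : x ≠ y ∈ P}`. -/
noncomputable def gapCount (L : ℝ) (P : Set ℝ) (r : ℝ) : ℕ :=
  {xy : ℝ × ℝ | xy.1 ∈ P ∧ xy.2 ∈ P ∧ xy.1 ≠ xy.2 ∧ |xy.1 - xy.2| = r}.ncard +
  {xy : ℝ × ℝ | xy.1 ∈ P ∧ xy.2 ∈ P ∧ xy.1 ≠ xy.2 ∧ L - |xy.1 - xy.2| = r}.ncard

open Finset AddCommGroup

section

open scoped Classical

variable {L : ℝ}

theorem mem_perSet_iff_exists_modEq {P : Set ℝ} {t : ℝ} :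
    t ∈ perSet L P ↔ ∃ q ∈ P, q ≡ t [PMOD L] := by
  simp only [perSet, Set.mem_ofPred_eq, modEq_iff_eq_add_zsmul, zsmul_eq_mul, mul_comm L]

theorem modEq_iff_eq_toIcoMod (hL : 0 < L) {x : ℝ} (hx : x ∈ Set.Ico 0 L) (r : ℝ) :
    x ≡ r [PMOD L] ↔ x = toIcoMod hL 0 r := by
  rw [← toIcoMod_inj (c := 0), toIcoMod_eq_self hL |>.2 (by simpa using hx)]

theorem mem_perSet_iff_s9 (hL : 0 < L) {P : Set ℝ} (hP : P ⊆ Set.Ico 0 L) {t : ℝ} :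
    t ∈ perSet L P ↔ toIcoMod hL 0 t ∈ P := by
  rw [mem_perSet_iff_exists_modEq]
  constructor
  · rintro ⟨q, hq, h⟩
    rwa [← (modEq_iff_eq_toIcoMod hL (hP hq) t).1 h]
  · exact fun h ↦ ⟨_, h, (modEq_iff_eq_toIcoMod hL (toIcoMod_mem_Ico' hL t) t).2 rfl⟩

theorem eq_of_modEq_of_mem_Ico (hL : 0 < L) {x y : ℝ} (hx : x ∈ Set.Ico 0 L)
    (hy : y ∈ Set.Ico 0 L) (h : x ≡ y [PMOD L]) : x = y :=
  ((modEq_iff_eq_toIcoMod hL hx y).1 h).trans ((modEq_iff_eq_toIcoMod hL hy y).1 modEq_rfl).symm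

theorem eq_and_eq_zero_of_sub_add_mul_eq_zero (hL : 0 < L) {x y : ℝ} (hx : x ∈ Set.Ico 0 L)
    (hy : y ∈ Set.Ico 0 L) {n : ℤ} (h : x - y + n * L = 0) : x = y ∧ n = 0 := by
  obtain rfl : x = y := eq_of_modEq_of_mem_Ico hL hx hy
    (modEq_iff_zsmul'.2 ⟨n, by rw [zsmul_eq_mul]; linarith⟩)
  simpa [hL.ne'] using h

theorem ite_modEq_add_ite_neg_modEq_of_pos (hL : 0 < L) {d : ℝ} (hd₀ : 0 < d) (hdL : d < L)
    (r : ℝ) :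
    ((if d ≡ r [PMOD L] then 1 else 0) + if -d ≡ r [PMOD L] then 1 else 0 : ℕ) =
      (if d = toIcoMod hL 0 r then 1 else 0) + if L - d = toIcoMod hL 0 r then 1 else 0 := by
  have hneg : -d ≡ r [PMOD L] ↔ L - d ≡ r [PMOD L] := by
    have h : L - d ≡ -d [PMOD L] := by simp [sub_eq_neg_add]
    exact ⟨h.trans, h.symm.trans⟩
  rw [hneg, modEq_iff_eq_toIcoMod hL ⟨hd₀.le, hdL⟩,
    modEq_iff_eq_toIcoMod hL ⟨by linarith, by linarith⟩]

theorem ite_modEq_add_ite_neg_modEq (hL : 0 < L) {d : ℝ} (hd₀ : d ≠ 0) (hdL : |d| < L)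
    (r : ℝ) :
    ((if d ≡ r [PMOD L] then 1 else 0) + if -d ≡ r [PMOD L] then 1 else 0 : ℕ) =
      (if |d| = toIcoMod hL 0 r then 1 else 0) + if L - |d| = toIcoMod hL 0 r then 1 else 0 := by
  rcases hd₀.lt_or_gt with hneg | hpos
  · rw [abs_of_neg hneg] at hdL ⊢
    rw [add_comm, ← ite_modEq_add_ite_neg_modEq_of_pos hL (neg_pos.2 hneg) hdL, neg_neg]
  · rw [abs_of_pos hpos] at hdL ⊢
    exact ite_modEq_add_ite_neg_modEq_of_pos hL hpos hdL r

theorem pairCount1D_eq_card_filter_add_card_filter (P : Finset ℝ) (S : Set ℝ) {r : ℝ}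
    (hr : 0 < r) :
    pairCount1D P S r = #{p ∈ P | p + r ∈ S} + #{p ∈ P | p - r ∈ S} := by
  have hset : {pq : ℝ × ℝ | pq.1 ∈ (P : Set ℝ) ∧ pq.2 ∈ S ∧ |pq.1 - pq.2| = r} =
      (fun p ↦ (p, p + r)) '' ↑{p ∈ P | p + r ∈ S} ∪
        (fun p ↦ (p, p - r)) '' ↑{p ∈ P | p - r ∈ S} := by
    ext ⟨p, q⟩
    simp only [Set.mem_ofPred_eq, Set.mem_union, Set.mem_image, coe_filter, Prod.mk.injEq]
    constructor
    · rintro ⟨hp, hq, hpq⟩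
      rcases (abs_eq hr.le).1 hpq with h | h
      · exact .inr ⟨p, ⟨hp, by rwa [← show q = p - r by linarith]⟩, rfl, by linarith⟩
      · exact .inl ⟨p, ⟨hp, by rwa [← show q = p + r by linarith]⟩, rfl, by linarith⟩
    · rintro (⟨p, ⟨hp, hq⟩, rfl, rfl⟩ | ⟨p, ⟨hp, hq⟩, rfl, rfl⟩) <;>
        exact ⟨hp, hq, by simp [hr.le]⟩
  have hinj (f : ℝ → ℝ) : Function.Injective fun p ↦ (p, f p) := fun _ _ h ↦ congrArg Prod.fst h
  rw [pairCount1D, hset, Set.ncard_union_eq, Set.ncard_image_of_injective _ (hinj _),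
    Set.ncard_image_of_injective _ (hinj _), Set.ncard_coe_finset, Set.ncard_coe_finset]
  · rw [Set.disjoint_left]
    rintro _ ⟨p, -, rfl⟩ ⟨p', -, h⟩
    simp only [Prod.mk.injEq] at h
    exact hr.ne' (by linarith [h.1, h.2])

theorem card_filter_add_mem_perSet (hL : 0 < L) {P : Finset ℝ} (hP : ↑P ⊆ Set.Ico 0 L)
    (a : ℝ) :
    #{p ∈ P | p + a ∈ perSet L P} = #{x ∈ P ×ˢ P | x.2 - x.1 ≡ a [PMOD L]} := by
  rw [card_filter, card_filter, sum_product]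
  refine sum_congr rfl fun p _ ↦ ?_
  have hrep : ∀ q ∈ P, (q - p ≡ a [PMOD L] ↔ toIcoMod hL 0 (p + a) = q) := fun q hq ↦ by
    rw [sub_modEq_iff_modEq_add', modEq_iff_eq_toIcoMod hL (hP hq), eq_comm]
  rw [sum_congr rfl fun q hq ↦ if_congr (hrep q hq) rfl rfl, sum_ite_eq, mem_perSet_iff_s9 hL hP]
  simp only [mem_coe]

theorem gapCount_eq_sum (P : Finset ℝ) (t : ℝ) :
    gapCount L P t = ∑ x ∈ P.offDiag,
      ((if |x.1 - x.2| = t then 1 else 0) + if L - |x.1 - x.2| = t then 1 else 0) := by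
  rw [gapCount, sum_add_distrib, ← card_filter, ← card_filter, ← Set.ncard_coe_finset,
    ← Set.ncard_coe_finset (filter _ _)]
  congr 2 <;> ext <;> simp [and_assoc]

theorem pairCount1D_perSet_s9 (hL : 0 < L) {P : Finset ℝ} (hP : ↑P ⊆ Set.Ico 0 L) {r : ℝ}
    (hr : 0 < r) :
    pairCount1D P (perSet L P) r =
      gapCount L P (toIcoMod hL 0 r) + if 0 ≡ r [PMOD L] then 2 * #P else 0 := by
  have hminus := card_filter_add_mem_perSet hL hP (-r)
  simp only [← sub_eq_add_neg] at hminus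
  rw [pairCount1D_eq_card_filter_add_card_filter P _ hr, card_filter_add_mem_perSet hL hP,
    hminus, card_filter, card_filter, ← sum_add_distrib, ← diag_union_offDiag,
    sum_union (disjoint_diag_offDiag P), gapCount_eq_sum, add_comm]
  congr 1
  · refine sum_congr rfl fun x hx ↦ ?_
    obtain ⟨hx₁, hx₂, hne⟩ := mem_offDiag.1 hx
    rw [← neg_modEq_neg (b := -r), neg_neg, abs_sub_comm]
    exact ite_modEq_add_ite_neg_modEq hL (sub_ne_zero.2 (Ne.symm hne))
      (abs_sub_lt_of_nonneg_of_lt (hP hx₂).1 (hP hx₂).2 (hP hx₁).1 (hP hx₁).2) r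
  · have hzero : (0 : ℝ) ≡ -r [PMOD L] ↔ 0 ≡ r [PMOD L] := by
      rw [← neg_modEq_neg, neg_zero, neg_neg]
    rw [sum_congr rfl fun x hx ↦ by rw [(mem_diag.1 hx).2, sub_self, hzero], sum_const,
      diag_card, smul_eq_mul]
    split_ifs <;> ring

theorem sum_gapCount {P D : Finset ℝ}
    (hD : ∀ x ∈ P.offDiag, |x.1 - x.2| ∈ D ∧ L - |x.1 - x.2| ∈ D) :
    ∑ t ∈ D, gapCount L P t = 2 * #P.offDiag := by
  simp_rw [gapCount_eq_sum]
  rw [sum_comm, card_eq_sum_ones, mul_sum]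
  refine sum_congr rfl fun x hx ↦ ?_
  rw [sum_add_distrib, sum_ite_eq, sum_ite_eq, if_pos (hD x hx).1, if_pos (hD x hx).2]
  rfl

theorem card_eq_of_gapCount_eq {P Q : Finset ℝ} (hP : P.Nonempty) (hQ : Q.Nonempty)
    (h : ∀ t, gapCount L P t = gapCount L Q t) : #P = #Q := by
  let D := ((P.offDiag ∪ Q.offDiag).image fun x ↦ |x.1 - x.2|) ∪
    (P.offDiag ∪ Q.offDiag).image fun x ↦ L - |x.1 - x.2|
  have hD {R : Finset ℝ} (hR : R.offDiag ⊆ P.offDiag ∪ Q.offDiag) (x) (hx : x ∈ R.offDiag) :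
      |x.1 - x.2| ∈ D ∧ L - |x.1 - x.2| ∈ D :=
    ⟨mem_union_left _ (mem_image_of_mem _ (hR hx)),
      mem_union_right _ (mem_image_of_mem _ (hR hx))⟩
  have hoff : #P.offDiag = #Q.offDiag := by
    have := sum_gapCount (hD subset_union_left)
    rw [sum_congr rfl fun t _ ↦ h t, sum_gapCount (hD subset_union_right)] at this
    omega
  rw [offDiag_card, offDiag_card] at hoff
  zify [Nat.le_mul_self #P, Nat.le_mul_self #Q] at hoff
  have : ((#P : ℤ) - #Q) * (#P + #Q - 1) = 0 := by linear_combination hoff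
  rcases mul_eq_zero.1 this with h | h
  · omega
  · have := hP.card_pos
    have := hQ.card_pos
    omega

end

/-- Every pair distance of `S = P + Lℤ` has the form `|x − y + nL|` with `x, y ∈ P`, `n ∈ ℤ`;
conversely every such value with `(x, y, n) ≠ (x, x, 0)` is realized by two distinct points of
`S`. Hence if two such sets have coinciding circular gap multisets, they are isospectral. -/
theorem stmt_9 (L : ℝ) (hL : 0 < L) (P₁ P₂ : Set ℝ)
    (hf₁ : P₁.Finite) (hf₂ : P₂.Finite)
    (hs₁ : P₁ ⊆ Set.Ico 0 L) (hs₂ : P₂ ⊆ Set.Ico 0 L)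
    (hne₁ : P₁.Nonempty) (hne₂ : P₂.Nonempty) :
    (∀ p ∈ perSet L P₁, ∀ q ∈ perSet L P₁,
      ∃ x ∈ P₁, ∃ y ∈ P₁, ∃ n : ℤ, dist p q = |x - y + n * L|) ∧
    (∀ x ∈ P₁, ∀ y ∈ P₁, ∀ n : ℤ, ¬(x = y ∧ n = 0) →
      ∃ p ∈ perSet L P₁, ∃ q ∈ perSet L P₁, p ≠ q ∧ dist p q = |x - y + n * L|) ∧
    ((∀ r : ℝ, gapCount L P₁ r = gapCount L P₂ r) →
      ∀ r : ℝ, 0 < r →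
        pairCount1D P₁ (perSet L P₁) r = pairCount1D P₂ (perSet L P₂) r) := by
  refine ⟨?_, ?_, ?_⟩
  · rintro p ⟨x, hx, m, rfl⟩ q ⟨y, hy, n, rfl⟩
    exact ⟨x, hx, y, hy, m - n, by rw [Real.dist_eq]; push_cast; ring_nf⟩
  · intro x hx y hy n hn
    refine ⟨x, ⟨x, hx, 0, by simp⟩, y - n * L, ⟨y, hy, -n, by push_cast; ring⟩,
      fun h ↦ hn (eq_and_eq_zero_of_sub_add_mul_eq_zero hL (hs₁ hx) (hs₁ hy) (by linarith)),
      by rw [Real.dist_eq]; ring_nf⟩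
  · intro hgap r hr
    lift P₁ to Finset ℝ using hf₁
    lift P₂ to Finset ℝ using hf₂
    rw [pairCount1D_perSet_s9 hL hs₁ hr, pairCount1D_perSet_s9 hL hs₂ hr, hgap,
      card_eq_of_gapCount_eq (coe_nonempty.1 hne₁) (coe_nonempty.1 hne₂) hgap]
end

section
/- Let C₁, C₂ ⊆ ℝ^d be crystals with n-particle bases sharing common lattice basis vectors a₁, …, a_d (so Cᵢ = {p + n₁a₁ + ⋯ + n_d a_d : p ∈ P_{Cᵢ}, n_k ∈ ℤ} with finite P_{Cᵢ}). Suppose that for every difference vector r_{ij} = p_i − p_j = λ₁a₁ + ⋯ + λ_d a_d with p_i, p_j ∈ P_{C₁}, there exist vectors a′₁, …, a′_d, a point q ∈ C₂, and a linear isometry T of ℝ^d with a′_k = T(a_k) for all k, such that (i) the lattice coset Λ′₂ = {n₁a′₁ + ⋯ + n_d a′_d + q : n_k ∈ ℤ} is contained in C₂, and (ii) r′_{ij} + q ∈ C₂, where r′_{ij} = λ₁a′₁ + ⋯ + λ_d a′_d. Then every distance that occurs between two points of C₁ also occurs between two points of C₂ (the distance set of C₁ is contained in that of C₂). -/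
/-- The crystal (periodic point set) with lattice basis vectors `a` and particle basis `P`. -/
def crystalSet {d : ℕ} (a : Fin d → EuclideanSpace ℝ (Fin d))
    (P : Set (EuclideanSpace ℝ (Fin d))) : Set (EuclideanSpace ℝ (Fin d)) :=
  {x | ∃ p ∈ P, ∃ n : Fin d → ℤ, x = p + ∑ k, (n k : ℝ) • a k}

/-! Since `a` is a basis, `p - p' = ∑ λₖ aₖ`. For `x = p + ∑ nₖ aₖ` and `y = p' + ∑ mₖ aₖ`, the
points `∑ λₖ a'ₖ + q` and `∑ (mₖ - nₖ) a'ₖ + q` of `C₂` differ by `T (x - y)`, so they are at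
distance `dist x y`. -/

open Finset

theorem exists_eq_sum_smul_of_linearIndependent {K V ι : Type*} [DivisionRing K]
    [AddCommGroup V] [Module K V] [FiniteDimensional K V] [Fintype ι] {a : ι → V}
    (ha : LinearIndependent K a)
    (hcard : Fintype.card ι = Module.finrank K V) (v : V) :
    ∃ lam : ι → K, v = ∑ k, lam k • a k := by
  have hv : v ∈ Submodule.span K (Set.range a) := by
    rw [ha.span_eq_top_of_card_eq_finrank' hcard]
    exact Submodule.mem_top
  obtain ⟨lam, hlam⟩ := (Submodule.mem_span_range_iff_exists_fun K).mp hv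
  exact ⟨lam, hlam.symm⟩

theorem LinearIsometry.dist_sum_smul_map_add {R E F ι : Type*} [Semiring R]
    [SeminormedAddCommGroup E] [SeminormedAddCommGroup F] [Module R E] [Module R F] [Fintype ι]
    (T : E →ₗᵢ[R] F) (a : ι → E) (c c' : ι → R) (q : F) :
    dist (∑ k, c k • T (a k) + q) (∑ k, c' k • T (a k) + q) =
      dist (∑ k, c k • a k) (∑ k, c' k • a k) := by
  simp_rw [dist_add_right, ← map_smul, ← map_sum, T.dist_map]

theorem dist_add_add_eq_dist_sub_sub {E : Type*} [SeminormedAddCommGroup E] (p p' v w : E) :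
    dist (p + v) (p' + w) = dist (p - p') (w - v) := by
  rw [dist_eq_norm, dist_eq_norm]
  congr 1
  abel

theorem sum_intCast_sub_smul {R M ι : Type*} [Ring R] [AddCommGroup M] [Module R M] [Fintype ι]
    (a : ι → M) (m n : ι → ℤ) :
    ∑ k, (((m - n) k : ℤ) : R) • a k = ∑ k, (m k : R) • a k - ∑ k, (n k : R) • a k := by
  simp only [Pi.sub_apply, Int.cast_sub, sub_smul, sum_sub_distrib]

theorem stmt_10_general {d : ℕ} (a : Fin d → EuclideanSpace ℝ (Fin d))
    (ha : LinearIndependent ℝ a)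
    (P₁ P₂ : Set (EuclideanSpace ℝ (Fin d)))
    (h : ∀ pi ∈ P₁, ∀ pj ∈ P₁, ∀ lam : Fin d → ℝ, pi - pj = ∑ k, lam k • a k →
      ∃ (a' : Fin d → EuclideanSpace ℝ (Fin d)) (q : EuclideanSpace ℝ (Fin d))
        (T : EuclideanSpace ℝ (Fin d) →ₗᵢ[ℝ] EuclideanSpace ℝ (Fin d)),
        (∀ k, a' k = T (a k)) ∧
        {x | ∃ n : Fin d → ℤ, x = (∑ k, (n k : ℝ) • a' k) + q} ⊆ crystalSet a P₂ ∧
        (∑ k, lam k • a' k) + q ∈ crystalSet a P₂) :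
    ∀ x ∈ crystalSet a P₁, ∀ y ∈ crystalSet a P₁,
      ∃ x' ∈ crystalSet a P₂, ∃ y' ∈ crystalSet a P₂, dist x' y' = dist x y := by
  rintro _ ⟨p, hp, n, rfl⟩ _ ⟨p', hp', m, rfl⟩
  obtain ⟨lam, hlam⟩ := exists_eq_sum_smul_of_linearIndependent ha (by simp) (p - p')
  obtain ⟨a', q, T, hT, hcoset, hmem⟩ := h p hp p' hp' lam hlam
  obtain rfl : a' = fun k => T (a k) := funext hT
  refine ⟨_, hmem, _, hcoset ⟨m - n, rfl⟩, ?_⟩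
  rw [T.dist_sum_smul_map_add, dist_add_add_eq_dist_sub_sub, hlam, sum_intCast_sub_smul]

/-- Theorem 1 of the paper: a sufficient condition for the distance set of crystal `C₁`
to be contained in that of crystal `C₂`, when both share lattice basis vectors `a`. -/
theorem stmt_10 {d : ℕ} (a : Fin d → EuclideanSpace ℝ (Fin d))
    (ha : LinearIndependent ℝ a)
    (P₁ P₂ : Set (EuclideanSpace ℝ (Fin d))) (hP₁ : P₁.Finite) (hP₂ : P₂.Finite)
    (h : ∀ pi ∈ P₁, ∀ pj ∈ P₁, ∀ lam : Fin d → ℝ, pi - pj = ∑ k, lam k • a k →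
      ∃ (a' : Fin d → EuclideanSpace ℝ (Fin d)) (q : EuclideanSpace ℝ (Fin d))
        (T : EuclideanSpace ℝ (Fin d) →ₗᵢ[ℝ] EuclideanSpace ℝ (Fin d)),
        (∀ k, a' k = T (a k)) ∧
        {x | ∃ n : Fin d → ℤ, x = (∑ k, (n k : ℝ) • a' k) + q} ⊆ crystalSet a P₂ ∧
        (∑ k, lam k • a' k) + q ∈ crystalSet a P₂) :
    ∀ x ∈ crystalSet a P₁, ∀ y ∈ crystalSet a P₁,
      ∃ x' ∈ crystalSet a P₂, ∃ y' ∈ crystalSet a P₂, dist x' y' = dist x y :=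
  stmt_10_general a ha P₁ P₂ h
end

section
/- With Λ, a₁, a₂, C₁, C₂ as in the hexagonal 3-particle-basis construction (C₁ = Λ ∪ (Λ + a₂/3) ∪ (Λ + 2a₂/3), C₂ = Λ ∪ (Λ + a₂/3) ∪ (Λ + 2a₁/3 + a₂/3), with r₁ = |a₂|/3 the nearest-neighbor distance): C₁ contains three distinct collinear points x, y, z with |x − y| = |y − z| = r₁ and |x − z| = 2r₁, but C₂ contains no such collinear triple at spacing r₁; conversely, C₂ contains three points forming an equilateral triangle of side r₁, but C₁ does not. In particular, no isometry of ℝ² maps C₁ onto C₂. -/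
/-!
Scaling the generators by `1/3` gives a hexagonal basis `b₁ = a₁/3`, `b₂ = a₂/3` in which both
crystals become images of sets of integer pairs: `C₁` is the image of the pairs `(P, Q)` with
`3 ∣ P`, and `C₂` of the pairs whose residues mod 3 are `(0,0)`, `(0,1)` or `(2,1)`. Since
`‖P b₁ + Q b₂‖² = r₁² (P² + PQ + Q²)`, the distances `r₁` and `2r₁` correspond to the values
`1` and `4` of this Eisenstein norm, and each claim becomes a congruence argument on the six
units `(±1, 0), (0, ±1), ±(1, -1)`. An isometry preserves equilateral triangles, so the
triangle in `C₂` and its absence in `C₁` rule out an isometry mapping `C₁` onto `C₂`.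
-/

open RealInnerProductSpace

section Triangles

variable {X Y : Type*} [PseudoMetricSpace X] [PseudoMetricSpace Y]

def HasTriangle (C : Set X) (a b c : ℝ) : Prop :=
  ∃ x ∈ C, ∃ y ∈ C, ∃ z ∈ C, x ≠ y ∧ y ≠ z ∧ x ≠ z ∧ dist x y = a ∧ dist y z = b ∧ dist x z = c

lemma HasTriangle.of_image {f : X → Y} (hf : Isometry f) {C : Set X} {a b c : ℝ}
    (h : HasTriangle (f '' C) a b c) : HasTriangle C a b c := by
  obtain ⟨_, ⟨x, hx, rfl⟩, _, ⟨y, hy, rfl⟩, _, ⟨z, hz, rfl⟩, hxy, hyz, hxz, dxy, dyz, dxz⟩ := h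
  refine ⟨x, hx, y, hy, z, hz, ne_of_apply_ne f hxy, ne_of_apply_ne f hyz, ne_of_apply_ne f hxz,
    ?_, ?_, ?_⟩ <;> rwa [← hf.dist_eq]

lemma hasTriangle_iff_of_pos {C : Set X} {a b c : ℝ} (ha : 0 < a) (hb : 0 < b) (hc : 0 < c) :
    HasTriangle C a b c ↔
      ∃ x ∈ C, ∃ y ∈ C, ∃ z ∈ C, dist x y = a ∧ dist y z = b ∧ dist x z = c := by
  refine ⟨fun ⟨x, hx, y, hy, z, hz, _, _, _, h⟩ => ⟨x, hx, y, hy, z, hz, h⟩,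
    fun ⟨x, hx, y, hy, z, hz, dxy, dyz, dxz⟩ => ⟨x, hx, y, hy, z, hz, ?_, ?_, ?_, dxy, dyz, dxz⟩⟩
  all_goals
    rintro rfl
    simp_all only [dist_self, lt_self_iff_false]

end Triangles

/-- The norm of the Eisenstein integer `p.1 + p.2 • e^{iπ/3}`. -/
def eisensteinNorm (p : ℤ × ℤ) : ℤ := p.1 ^ 2 + p.1 * p.2 + p.2 ^ 2

lemma eisensteinNorm_add_add_eisensteinNorm_sub (u v : ℤ × ℤ) :
    eisensteinNorm (u + v) + eisensteinNorm (u - v) =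
      2 * eisensteinNorm u + 2 * eisensteinNorm v := by
  simp only [eisensteinNorm, Prod.fst_add, Prod.snd_add, Prod.fst_sub, Prod.snd_sub]
  ring

lemma eisensteinNorm_eq_zero_iff {p : ℤ × ℤ} : eisensteinNorm p = 0 ↔ p = 0 := by
  refine ⟨fun h => ?_, fun h => by simp [h, eisensteinNorm]⟩
  have hsq : (2 * p.1 + p.2) ^ 2 + 3 * p.2 ^ 2 = 0 := by
    rw [eisensteinNorm] at h
    linear_combination 4 * h
  have hsnd : p.2 = 0 := by nlinarith [sq_nonneg (2 * p.1 + p.2), sq_nonneg p.2]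
  ext <;> simp only [Prod.fst_zero, Prod.snd_zero] <;> nlinarith [sq_nonneg (2 * p.1 + p.2)]

lemma eq_of_eisensteinNorm_add_eq_four {u v : ℤ × ℤ} (hu : eisensteinNorm u = 1)
    (hv : eisensteinNorm v = 1) (huv : eisensteinNorm (u + v) = 4) : u = v := by
  rw [← sub_eq_zero, ← eisensteinNorm_eq_zero_iff]
  linarith [eisensteinNorm_add_add_eisensteinNorm_sub u v]

lemma eisensteinNorm_eq_one {p : ℤ × ℤ} (h : eisensteinNorm p = 1) :
    p.1 = 1 ∧ p.2 = 0 ∨ p.1 = -1 ∧ p.2 = 0 ∨ p.1 = 0 ∧ p.2 = 1 ∨ p.1 = 0 ∧ p.2 = -1 ∨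
      p.1 = 1 ∧ p.2 = -1 ∨ p.1 = -1 ∧ p.2 = 1 := by
  obtain ⟨a, b⟩ := p
  simp only [eisensteinNorm] at h ⊢
  obtain ⟨ha, ha'⟩ := abs_le.mp <|
    (sq_le_one_iff_abs_le_one a).mp (by nlinarith [sq_nonneg (a + 2 * b)])
  obtain ⟨hb, hb'⟩ := abs_le.mp <|
    (sq_le_one_iff_abs_le_one b).mp (by nlinarith [sq_nonneg (2 * a + b)])
  interval_cases a <;> interval_cases b <;> simp_all

def residueClassMod3 (i j : ℤ) : Set (ℤ × ℤ) := {p | p.1 % 3 = i ∧ p.2 % 3 = j}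

def striped : Set (ℤ × ℤ) := residueClassMod3 0 0 ∪ residueClassMod3 0 1 ∪ residueClassMod3 0 2

def clustered : Set (ℤ × ℤ) := residueClassMod3 0 0 ∪ residueClassMod3 0 1 ∪ residueClassMod3 2 1

lemma mem_striped {p : ℤ × ℤ} : p ∈ striped ↔ p.1 % 3 = 0 := by
  simp only [striped, residueClassMod3, Set.mem_union, Set.mem_ofPred_eq]
  omega

lemma not_exists_equilateral_striped : ¬ ∃ p ∈ striped, ∃ q ∈ striped, ∃ t ∈ striped,
    eisensteinNorm (p - q) = 1 ∧ eisensteinNorm (q - t) = 1 ∧ eisensteinNorm (p - t) = 1 := by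
  rintro ⟨p, hp, q, hq, t, ht, hpq, hqt, hpt⟩
  rw [mem_striped] at hp hq ht
  have := eisensteinNorm_eq_one hpq
  have := eisensteinNorm_eq_one hqt
  have := eisensteinNorm_eq_one hpt
  simp only [Prod.fst_sub, Prod.snd_sub] at *
  omega

lemma exists_collinear_striped : ∃ p ∈ striped, ∃ q ∈ striped, ∃ t ∈ striped,
    eisensteinNorm (p - q) = 1 ∧ eisensteinNorm (q - t) = 1 ∧ eisensteinNorm (p - t) = 4 :=
  ⟨(0, 0), by simp [mem_striped], (0, 1), by simp [mem_striped], (0, 2), by simp [mem_striped],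
    by decide⟩

lemma exists_equilateral_clustered : ∃ p ∈ clustered, ∃ q ∈ clustered, ∃ t ∈ clustered,
    eisensteinNorm (p - q) = 1 ∧ eisensteinNorm (q - t) = 1 ∧ eisensteinNorm (p - t) = 1 :=
  ⟨(0, 0), by simp [clustered, residueClassMod3], (0, 1), by simp [clustered, residueClassMod3],
    (-1, 1), by simp [clustered, residueClassMod3], by decide⟩

/-- By the parallelogram law the three points are `q + u, q, q - u` for a unit `u`; they lie in
three distinct residue classes mod 3 forming a line of `(ZMod 3)²`, whereas the three classes of
`clustered` are not collinear. -/
lemma not_exists_collinear_clustered : ¬ ∃ p ∈ clustered, ∃ q ∈ clustered, ∃ t ∈ clustered,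
    eisensteinNorm (p - q) = 1 ∧ eisensteinNorm (q - t) = 1 ∧ eisensteinNorm (p - t) = 4 := by
  rintro ⟨p, hp, q, hq, t, ht, hpq, hqt, hpt⟩
  have hstep : p - q = q - t :=
    eq_of_eisensteinNorm_add_eq_four hpq hqt (by rwa [sub_add_sub_cancel])
  have hunit := eisensteinNorm_eq_one hpq
  have h₁ := congrArg Prod.fst hstep
  have h₂ := congrArg Prod.snd hstep
  simp only [clustered, residueClassMod3, Set.mem_union, Set.mem_ofPred_eq, Prod.fst_sub,
    Prod.snd_sub] at *
  omega

section Lattice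

variable {E : Type*} [AddCommGroup E]

def latticePoint (b₁ b₂ : E) : ℤ × ℤ →+ E :=
  (zmultiplesHom E b₁).coprod (zmultiplesHom E b₂)

@[simp]
lemma latticePoint_apply (b₁ b₂ : E) (p : ℤ × ℤ) :
    latticePoint b₁ b₂ p = p.1 • b₁ + p.2 • b₂ := rfl

variable [Module ℝ E] (a₁ a₂ : E)

lemma latticePoint_three_mul_add (m n i j : ℤ) :
    latticePoint ((3 : ℝ)⁻¹ • a₁) ((3 : ℝ)⁻¹ • a₂) (3 * m + i, 3 * n + j) =
      m • a₁ + n • a₂ + latticePoint ((3 : ℝ)⁻¹ • a₁) ((3 : ℝ)⁻¹ • a₂) (i, j) := by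
  simp only [latticePoint_apply]
  module

lemma image_add_latticePoint {i j : ℤ} (hi : 0 ≤ i ∧ i < 3) (hj : 0 ≤ j ∧ j < 3) :
    (· + latticePoint ((3 : ℝ)⁻¹ • a₁) ((3 : ℝ)⁻¹ • a₂) (i, j)) ''
        {v | ∃ m n : ℤ, v = m • a₁ + n • a₂} =
      latticePoint ((3 : ℝ)⁻¹ • a₁) ((3 : ℝ)⁻¹ • a₂) '' residueClassMod3 i j := by
  ext x
  constructor
  · rintro ⟨_, ⟨m, n, rfl⟩, rfl⟩
    exact ⟨(3 * m + i, 3 * n + j), by simp only [residueClassMod3, Set.mem_ofPred_eq]; omega,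
      latticePoint_three_mul_add a₁ a₂ m n i j⟩
  · rintro ⟨p, ⟨hp₁, hp₂⟩, rfl⟩
    obtain ⟨m, n, rfl⟩ : ∃ m n : ℤ, p = (3 * m + i, 3 * n + j) :=
      ⟨p.1 / 3, p.2 / 3, by ext <;> dsimp only <;> omega⟩
    exact ⟨_, ⟨m, n, rfl⟩, (latticePoint_three_mul_add a₁ a₂ m n i j).symm⟩

lemma image_latticePoint_residueClassMod3_zero :
    latticePoint ((3 : ℝ)⁻¹ • a₁) ((3 : ℝ)⁻¹ • a₂) '' residueClassMod3 0 0 =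
      {v | ∃ m n : ℤ, v = m • a₁ + n • a₂} := by
  simpa only [Prod.mk_zero_zero, map_zero, add_zero, Set.image_id'] using
    (image_add_latticePoint a₁ a₂ (i := 0) (j := 0) (by norm_num) (by norm_num)).symm

end Lattice

/-- `b₁` and `b₂` have equal length and meet at angle `π/3`. -/
structure IsHexBasis {E : Type*} [NormedAddCommGroup E] [InnerProductSpace ℝ E] (b₁ b₂ : E) :
    Prop where
  norm_eq : ‖b₁‖ = ‖b₂‖
  two_inner : 2 * ⟪b₁, b₂⟫ = ‖b₂‖ ^ 2

lemma isHexBasis_hexagonal (s : ℝ) :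
    IsHexBasis (!₂[s, 0] : EuclideanSpace ℝ (Fin 2)) !₂[s / 2, s * √3 / 2] := by
  have hnorm : ‖(!₂[s / 2, s * √3 / 2] : EuclideanSpace ℝ (Fin 2))‖ ^ 2 = s ^ 2 := by
    rw [EuclideanSpace.norm_sq_eq, Fin.sum_univ_two]
    simp only [Matrix.cons_val_zero, Matrix.cons_val_one, Real.norm_eq_abs, sq_abs]
    linear_combination (s ^ 2 / 4) * Real.sq_sqrt (show (0 : ℝ) ≤ 3 by norm_num)
  constructor
  · rw [← sq_eq_sq₀ (norm_nonneg _) (norm_nonneg _), hnorm, EuclideanSpace.norm_sq_eq,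
      Fin.sum_univ_two]
    simp
  · rw [hnorm]
    simp only [PiLp.inner_apply, RCLike.inner_apply, Real.ringHom_apply, Fin.sum_univ_two,
      Matrix.cons_val_zero, Matrix.cons_val_one, Matrix.cons_val_fin_one, mul_zero, add_zero]
    ring

namespace IsHexBasis

variable {E : Type*} [NormedAddCommGroup E] [InnerProductSpace ℝ E] {b₁ b₂ : E}

lemma smul (h : IsHexBasis b₁ b₂) (c : ℝ) : IsHexBasis (c • b₁) (c • b₂) where
  norm_eq := by rw [norm_smul, norm_smul, h.norm_eq]
  two_inner := by
    rw [real_inner_smul_left, real_inner_smul_right, norm_smul, mul_pow, ← h.two_inner,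
      Real.norm_eq_abs, sq_abs]
    ring

lemma norm_sq_latticePoint (h : IsHexBasis b₁ b₂) (p : ℤ × ℤ) :
    ‖latticePoint b₁ b₂ p‖ ^ 2 = ‖b₂‖ ^ 2 * eisensteinNorm p := by
  rw [latticePoint_apply, ← Int.cast_smul_eq_zsmul ℝ, ← Int.cast_smul_eq_zsmul ℝ,
    norm_add_sq_real, norm_smul, norm_smul, real_inner_smul_left, real_inner_smul_right,
    h.norm_eq, eisensteinNorm]
  simp only [Real.norm_eq_abs, mul_pow, sq_abs]
  push_cast
  linear_combination (p.1 : ℝ) * p.2 * h.two_inner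

lemma dist_latticePoint_eq_mul_iff (h : IsHexBasis b₁ b₂) (hb₂ : b₂ ≠ 0) (p q : ℤ × ℤ)
    (k : ℕ) :
    dist (latticePoint b₁ b₂ p) (latticePoint b₁ b₂ q) = ‖b₂‖ * k ↔
      eisensteinNorm (p - q) = k ^ 2 := by
  rw [dist_eq_norm, ← map_sub, ← sq_eq_sq₀ (norm_nonneg _) (by positivity),
    h.norm_sq_latticePoint, mul_pow, mul_right_inj' (by positivity)]
  norm_cast

lemma hasTriangle_image_iff (h : IsHexBasis b₁ b₂) (hb₂ : b₂ ≠ 0) (D : Set (ℤ × ℤ))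
    {k₁ k₂ k₃ : ℕ} (hk₁ : 0 < k₁) (hk₂ : 0 < k₂) (hk₃ : 0 < k₃) :
    HasTriangle (latticePoint b₁ b₂ '' D) (‖b₂‖ * k₁) (‖b₂‖ * k₂) (‖b₂‖ * k₃) ↔
      ∃ p ∈ D, ∃ q ∈ D, ∃ t ∈ D, eisensteinNorm (p - q) = k₁ ^ 2 ∧
        eisensteinNorm (q - t) = k₂ ^ 2 ∧ eisensteinNorm (p - t) = k₃ ^ 2 := by
  rw [hasTriangle_iff_of_pos (by positivity) (by positivity) (by positivity)]
  simp only [Set.exists_mem_image, h.dist_latticePoint_eq_mul_iff hb₂]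

end IsHexBasis

/-- The striped crystal `C₁` contains a collinear triple at spacing `r₁ = ‖a₂‖/3` while the
clustered crystal `C₂` does not; `C₂` contains an equilateral triangle of side `r₁` while
`C₁` does not; hence no isometry of `ℝ²` maps `C₁` onto `C₂`. -/
theorem stmt_15 :
    let s : ℝ := Real.sqrt (2 / Real.sqrt 3)
    let a₁ : EuclideanSpace ℝ (Fin 2) := !₂[s, 0]
    let a₂ : EuclideanSpace ℝ (Fin 2) := !₂[s / 2, s * Real.sqrt 3 / 2]
    let Λ : Set (EuclideanSpace ℝ (Fin 2)) := {v | ∃ m n : ℤ, v = m • a₁ + n • a₂}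
    let p₂ : EuclideanSpace ℝ (Fin 2) := (3 : ℝ)⁻¹ • a₂
    let p₃ : EuclideanSpace ℝ (Fin 2) := (2 / 3 : ℝ) • a₂
    let p₃' : EuclideanSpace ℝ (Fin 2) := (2 / 3 : ℝ) • a₁ + (3 : ℝ)⁻¹ • a₂
    let C₁ : Set (EuclideanSpace ℝ (Fin 2)) := Λ ∪ (· + p₂) '' Λ ∪ (· + p₃) '' Λ
    let C₂ : Set (EuclideanSpace ℝ (Fin 2)) := Λ ∪ (· + p₂) '' Λ ∪ (· + p₃') '' Λ
    let r₁ : ℝ := ‖a₂‖ / 3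
    (∃ x ∈ C₁, ∃ y ∈ C₁, ∃ z ∈ C₁, x ≠ y ∧ y ≠ z ∧ x ≠ z ∧
      dist x y = r₁ ∧ dist y z = r₁ ∧ dist x z = 2 * r₁) ∧
    (¬ ∃ x ∈ C₂, ∃ y ∈ C₂, ∃ z ∈ C₂, x ≠ y ∧ y ≠ z ∧ x ≠ z ∧
      dist x y = r₁ ∧ dist y z = r₁ ∧ dist x z = 2 * r₁) ∧
    (∃ x ∈ C₂, ∃ y ∈ C₂, ∃ z ∈ C₂, x ≠ y ∧ y ≠ z ∧ x ≠ z ∧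
      dist x y = r₁ ∧ dist y z = r₁ ∧ dist x z = r₁) ∧
    (¬ ∃ x ∈ C₁, ∃ y ∈ C₁, ∃ z ∈ C₁, x ≠ y ∧ y ≠ z ∧ x ≠ z ∧
      dist x y = r₁ ∧ dist y z = r₁ ∧ dist x z = r₁) ∧
    (¬ ∃ f : EuclideanSpace ℝ (Fin 2) → EuclideanSpace ℝ (Fin 2),
      Isometry f ∧ f '' C₁ = C₂) := by
  intro s a₁ a₂ Λ p₂ p₃ p₃' C₁ C₂ r₁
  set L := latticePoint ((3 : ℝ)⁻¹ • a₁) ((3 : ℝ)⁻¹ • a₂)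
  have hex : IsHexBasis ((3 : ℝ)⁻¹ • a₁) ((3 : ℝ)⁻¹ • a₂) := (isHexBasis_hexagonal s).smul _
  have hb₂ : (3 : ℝ)⁻¹ • a₂ ≠ 0 := by
    have hs : s ≠ 0 := by positivity
    refine smul_ne_zero (by norm_num) fun ha₂ => hs ?_
    simpa [a₂] using congrArg (· 0) ha₂
  have hr₁ : r₁ = ‖(3 : ℝ)⁻¹ • a₂‖ := by
    rw [norm_smul, norm_inv, RCLike.norm_ofNat, inv_mul_eq_div]
  have hcoset (i j : ℤ) (hi : 0 ≤ i ∧ i < 3 := by norm_num) (hj : 0 ≤ j ∧ j < 3 := by norm_num) :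
      (· + L (i, j)) '' Λ = L '' residueClassMod3 i j :=
    image_add_latticePoint a₁ a₂ hi hj
  have hΛ : Λ = L '' residueClassMod3 0 0 := (image_latticePoint_residueClassMod3_zero a₁ a₂).symm
  have hp₂ : p₂ = L (0, 1) := by simp [L, p₂]
  have hp₃ : p₃ = L (0, 2) := by simp only [L, latticePoint_apply, p₃]; module
  have hp₃' : p₃' = L (2, 1) := by simp only [L, latticePoint_apply, p₃']; module
  have hC₁ : C₁ = L '' striped := by
    simp only [C₁, hp₂, hp₃, hcoset 0 1, hcoset 0 2]
    rw [hΛ, striped, Set.image_union, Set.image_union]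
  have hC₂ : C₂ = L '' clustered := by
    simp only [C₂, hp₂, hp₃', hcoset 0 1, hcoset 2 1]
    rw [hΛ, clustered, Set.image_union, Set.image_union]
  have collinear (D : Set (ℤ × ℤ)) : HasTriangle (L '' D) r₁ r₁ (2 * r₁) ↔
      ∃ p ∈ D, ∃ q ∈ D, ∃ t ∈ D, eisensteinNorm (p - q) = 1 ∧ eisensteinNorm (q - t) = 1 ∧
        eisensteinNorm (p - t) = 4 := by
    simpa [hr₁, mul_comm (2 : ℝ)] using
      hex.hasTriangle_image_iff hb₂ D (k₁ := 1) (k₂ := 1) (k₃ := 2) one_pos one_pos two_pos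
  have equilateral (D : Set (ℤ × ℤ)) : HasTriangle (L '' D) r₁ r₁ r₁ ↔
      ∃ p ∈ D, ∃ q ∈ D, ∃ t ∈ D, eisensteinNorm (p - q) = 1 ∧ eisensteinNorm (q - t) = 1 ∧
        eisensteinNorm (p - t) = 1 := by
    simpa [hr₁] using hex.hasTriangle_image_iff hb₂ D one_pos one_pos one_pos
  have h₃ : HasTriangle C₂ r₁ r₁ r₁ := hC₂ ▸ (equilateral _).mpr exists_equilateral_clustered
  have h₄ : ¬ HasTriangle C₁ r₁ r₁ r₁ :=
    hC₁ ▸ (equilateral _).not.mpr not_exists_equilateral_striped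
  exact ⟨hC₁ ▸ (collinear _).mpr exists_collinear_striped,
    hC₂ ▸ (collinear _).not.mpr not_exists_collinear_clustered, h₃, h₄,
    fun ⟨f, hf, hfC⟩ => h₄ (.of_image hf (hfC ▸ h₃))⟩
end
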